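/- Fix c₀ ≠ 0, ε ∈ {−1, 1}, and a continuous function 𝔥 : [−1, 1] → ℝ that is even, i.e. 𝔥(−t) = 𝔥(t) for all t ∈ [−1, 1]. If γ(s) = (x(s), y(s)) : I → ℝ² is differentiable, with x(s) ≠ 0 and |y(s)| < 1 for all s ∈ I, and γ solves the helicoidal ODE system (x, y)' = Φ(x, y), then s ↦ (x(−s), −y(−s)) also solves the same system on −I; consequently every orbit of the system is symmetric with respect to the axis y = 0. -/

import Mathlib

/-- The vector field of the helicoidal prescribed mean curvature ODE system
`(x, y)' = Φ(x, y)`. -/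
noncomputable def helicoidalField (c₀ ε : ℝ) (𝔥 : ℝ → ℝ) (p : ℝ × ℝ) : ℝ × ℝ :=
  (p.2,
    ((1 - p.2 ^ 2) * (p.1 ^ 2 + 2 * c₀ ^ 2 * p.2 ^ 2)
        - 2 * ε * 𝔥 (p.1 * p.2 / Real.sqrt (c₀ ^ 2 * p.2 ^ 2 + p.1 ^ 2))
          * Real.sqrt (1 - p.2 ^ 2) * (c₀ ^ 2 * p.2 ^ 2 + p.1 ^ 2) ^ ((3 : ℝ) / 2))
      / (p.1 ^ 3 + c₀ ^ 2 * p.1))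

/-!
The system is reversible: the reflection `σ (x, y) = (x, -y)` satisfies `Φ ∘ σ = -σ ∘ Φ`,
because `Φ` depends on `y` only through `y ^ 2`, `y` itself in the first component, and the
argument `x y / √(c₀² y² + x²)` of `𝔥`, which changes sign and stays in `[-1, 1]` when `|y| ≤ 1`.
For a reversible field, `t ↦ σ (γ (-t))` is a solution whenever `γ` is.
-/

open Real

theorem HasDerivAt.comp_neg_of_reversible {E : Type*} [NormedAddCommGroup E] [NormedSpace ℝ E]
    (σ : E →L[ℝ] E) {F : E → E} {γ : ℝ → E} {s : ℝ}
    (hrev : F (σ (γ (-s))) = -σ (F (γ (-s)))) (hγ : HasDerivAt γ (F (γ (-s))) (-s)) :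
    HasDerivAt (fun t => σ (γ (-t))) (F (σ (γ (-s)))) s := by
  have hback : HasDerivAt (fun t => γ (-t)) (-F (γ (-s))) s := by
    simpa [Function.comp_def] using hγ.scomp s (hasDerivAt_neg s)
  rw [hrev, ← map_neg]
  exact σ.hasFDerivAt.comp_hasDerivAt s hback

def reflectY : ℝ × ℝ →L[ℝ] ℝ × ℝ :=
  (ContinuousLinearMap.fst ℝ ℝ ℝ).prod (-ContinuousLinearMap.snd ℝ ℝ ℝ)

@[simp]
theorem reflectY_apply (p : ℝ × ℝ) : reflectY p = (p.1, -p.2) := rfl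

theorem abs_mul_div_sqrt_le_one (c x y : ℝ) (hy : |y| ≤ 1) :
    |x * y / √(c ^ 2 * y ^ 2 + x ^ 2)| ≤ 1 := by
  have hx : |x| ≤ √(c ^ 2 * y ^ 2 + x ^ 2) := by
    rw [← sqrt_sq_eq_abs]
    exact sqrt_le_sqrt (by nlinarith [sq_nonneg (c * y)])
  rw [abs_div, abs_mul, abs_of_nonneg (sqrt_nonneg _)]
  refine div_le_one_of_le₀ ?_ (sqrt_nonneg _)
  calc |x| * |y| ≤ |x| := mul_le_of_le_one_right (abs_nonneg x) hy
    _ ≤ _ := hx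

theorem helicoidalField_reflectY (c₀ ε : ℝ) {𝔥 : ℝ → ℝ}
    (heven : ∀ t ∈ Set.Icc (-1 : ℝ) 1, 𝔥 (-t) = 𝔥 t) {p : ℝ × ℝ} (hp : |p.2| ≤ 1) :
    helicoidalField c₀ ε 𝔥 (reflectY p) = -reflectY (helicoidalField c₀ ε 𝔥 p) := by
  obtain ⟨x, y⟩ := p
  have h𝔥 : 𝔥 (x * -y / √(c₀ ^ 2 * y ^ 2 + x ^ 2)) = 𝔥 (x * y / √(c₀ ^ 2 * y ^ 2 + x ^ 2)) := by
    rw [mul_neg, neg_div]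
    exact heven _ (abs_le.1 (abs_mul_div_sqrt_le_one c₀ x y hp))
  simp only [helicoidalField, reflectY_apply, neg_sq, h𝔥, Prod.neg_mk, neg_neg]

theorem helicoidal_system_orbit_symmetric (c₀ ε : ℝ) (𝔥 : ℝ → ℝ)
    (heven : ∀ t ∈ Set.Icc (-1 : ℝ) 1, 𝔥 (-t) = 𝔥 t)
    (I : Set ℝ) (x y : ℝ → ℝ)
    (hy1 : ∀ s ∈ I, |y s| < 1)
    (hsol : ∀ s ∈ I,
      HasDerivAt (fun t => (x t, y t)) (helicoidalField c₀ ε 𝔥 (x s, y s)) s) :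
    ∀ s : ℝ, -s ∈ I →
      HasDerivAt (fun t => (x (-t), -y (-t)))
        (helicoidalField c₀ ε 𝔥 (x (-s), -y (-s))) s := by
  intro s hs
  exact (hsol (-s) hs).comp_neg_of_reversible reflectY
    (helicoidalField_reflectY c₀ ε heven (hy1 (-s) hs).le)
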